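/- arXiv:2201.12648 — 3 statements merged into one kernel-verified Lean document; each statement's English description precedes it below -/
import Mathlib

section
/- If an ε₁-differentially private mechanism is followed by an ε₂-differentially private mechanism (the second possibly depending on the output of the first), the combined mechanism is (ε₁+ε₂)-differentially private. -/
lemma comp_apply {O₁ O₂ : Type*} (p : PMF O₁) (q : O₁ → PMF O₂) (z : O₁) (w : O₂) :
    (p.bind (fun a => (q a).map (fun b => (a, b)))) (z, w) = p z * q z w := by
  classical
  rw [PMF.bind_apply]
  rw [tsum_eq_single z]
  · rw [PMF.map_apply, tsum_eq_single w]
    · simp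
    · intro b hb
      rw [if_neg]
      simp [Prod.ext_iff, Ne.symm hb]
  · intro a ha
    rw [PMF.map_apply]
    have h0 : ∀ b : O₂, (if (z, w) = (a, b) then (q a) b else 0) = 0 := by
      intro b
      rw [if_neg]
      simp [Prod.ext_iff]
      intro h; exact absurd h.symm ha
    simp [h0]
    exact Or.inr fun h => absurd h.symm ha

lemma pointwise_of_dp {O : Type*} {p q : PMF O} {c : ENNReal}
    (h : ∀ S : Set O, p.toOuterMeasure S ≤ c * q.toOuterMeasure S) (x : O) :
    p x ≤ c * q x := by
  have := h {x}
  simpa [PMF.toOuterMeasure_apply_singleton] using this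

open MeasureTheory in
/-- Sequential (adaptive) composition: an ε₁-DP mechanism followed by an ε₂-DP mechanism
    (which may depend on the first's output) is (ε₁+ε₂)-DP. -/
theorem adaptive_composition_pure_dp
    {Dataset O₁ O₂ : Type*} (neighbor : Dataset → Dataset → Prop)
    (M₁ : Dataset → PMF O₁) (M₂ : Dataset → O₁ → PMF O₂) (ε₁ ε₂ : ℝ)
    (h₁ : ∀ D D', neighbor D D' → ∀ S : Set O₁,
      (M₁ D).toOuterMeasure S ≤ ENNReal.ofReal (Real.exp ε₁) * (M₁ D').toOuterMeasure S)
    (h₂ : ∀ z, ∀ D D', neighbor D D' → ∀ S : Set O₂,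
      (M₂ D z).toOuterMeasure S ≤ ENNReal.ofReal (Real.exp ε₂) * (M₂ D' z).toOuterMeasure S) :
    ∀ D D', neighbor D D' → ∀ S : Set (O₁ × O₂),
      ((M₁ D).bind (fun z => (M₂ D z).map (fun w => (z, w)))).toOuterMeasure S
        ≤ ENNReal.ofReal (Real.exp (ε₁ + ε₂)) *
          ((M₁ D').bind (fun z => (M₂ D' z).map (fun w => (z, w)))).toOuterMeasure S := by
  intro D D' hN S
  have key : ∀ x : O₁ × O₂,
      ((M₁ D).bind (fun z => (M₂ D z).map (fun w => (z, w)))) x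
        ≤ ENNReal.ofReal (Real.exp (ε₁ + ε₂)) *
          ((M₁ D').bind (fun z => (M₂ D' z).map (fun w => (z, w)))) x := by
    rintro ⟨z, w⟩
    rw [comp_apply, comp_apply]
    have a1 := pointwise_of_dp (h₁ D D' hN) z
    have a2 := pointwise_of_dp (h₂ z D D' hN) w
    calc M₁ D z * M₂ D z w
        ≤ (ENNReal.ofReal (Real.exp ε₁) * M₁ D' z) *
          (ENNReal.ofReal (Real.exp ε₂) * M₂ D' z w) := mul_le_mul' a1 a2
      _ = (ENNReal.ofReal (Real.exp ε₁) * ENNReal.ofReal (Real.exp ε₂)) *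
          (M₁ D' z * M₂ D' z w) := by ring
      _ = ENNReal.ofReal (Real.exp (ε₁ + ε₂)) * (M₁ D' z * M₂ D' z w) := by
          rw [← ENNReal.ofReal_mul (Real.exp_nonneg _), ← Real.exp_add]
  rw [PMF.toOuterMeasure_apply, PMF.toOuterMeasure_apply, ← ENNReal.tsum_mul_left]
  refine ENNReal.tsum_le_tsum fun x => ?_
  by_cases hx : x ∈ S
  · simpa [Set.indicator_of_mem hx] using key x
  · simp [Set.indicator_of_notMem hx]
end

section
/- Let f₁,…,f_k be quality functions on (dataset, distribution) pairs, each with robust sensitivity at most Δ at scale ζ. The Weighted Return Noisy Max mechanism, which adds i.i.d. Laplace(1/η) noise Z_i to each f_i and outputs argmax_i (f_i + Z_i), satisfies: for neighboring datasets S ∼ S', distributions μ, μ' with d(μ,μ') < ζ, and every index i, Pr[WRNM(S,μ) = i] ≤ exp(2ηΔ)·Pr[WRNM(S',μ') = i]. -/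
/-!
Shifting the noise vector by `2Δ` in the coordinate `i` maps every noise vector that makes
`i` win on `(S, μ)` to one that makes `i` win on `(S', μ')`: each competitor moves by at most
`Δ` and `i` itself by at most `Δ`. Under the product Laplace density this shift costs a factor
at most `exp (2ηΔ)`, because `x ↦ -η|x|` is `η`-Lipschitz, and Lebesgue measure is invariant
under translation.
-/

open MeasureTheory

section Translation

variable {G : Type*} [MeasurableSpace G] [AddGroup G] [MeasurableAdd G]

theorem withDensity_le_mul_of_sub_mem {μ : Measure G} [μ.IsAddRightInvariant]
    {ρ : G → ENNReal} {K : ENNReal} (hK : K ≠ ⊤) {c : G} (hρ : ∀ z, ρ (z - c) ≤ K * ρ z)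
    {A A' : Set G} (hA : MeasurableSet A) (hA' : MeasurableSet A')
    (hAA' : ∀ z, z - c ∈ A → z ∈ A') :
    μ.withDensity ρ A ≤ K * μ.withDensity ρ A' := by
  have hpointwise : ∀ z, A.indicator ρ (z - c) ≤ K * A'.indicator ρ z := by
    intro z
    by_cases hz : z - c ∈ A
    · rw [Set.indicator_of_mem hz, Set.indicator_of_mem (hAA' z hz)]
      exact hρ z
    · rw [Set.indicator_of_notMem hz]
      exact zero_le
  rw [withDensity_apply _ hA, withDensity_apply _ hA', ← lintegral_indicator hA,
    ← lintegral_indicator hA', ← lintegral_const_mul' _ _ hK,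
    ← lintegral_sub_right_eq_self _ c]
  exact lintegral_mono hpointwise

end Translation

theorem laplace_density_sub_le {η : ℝ} (hη : 0 ≤ η) (x a : ℝ) :
    η / 2 * Real.exp (-η * |x - a|) ≤ Real.exp (η * |a|) * (η / 2 * Real.exp (-η * |x|)) := by
  have htriangle : |x| ≤ |x - a| + |a| := by
    simpa using abs_add_le (x - a) a
  calc η / 2 * Real.exp (-η * |x - a|)
      ≤ η / 2 * Real.exp (η * |a| + -η * |x|) := by gcongr; nlinarith
    _ = Real.exp (η * |a|) * (η / 2 * Real.exp (-η * |x|)) := by rw [Real.exp_add]; ring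

theorem prod_laplace_density_sub_le {ι : Type*} [Fintype ι] {η : ℝ} (hη : 0 ≤ η)
    (z c : ι → ℝ) :
    ∏ j, η / 2 * Real.exp (-η * |(z - c) j|)
      ≤ Real.exp (η * ∑ j, |c j|) * ∏ j, η / 2 * Real.exp (-η * |z j|) := by
  rw [Finset.mul_sum, Real.exp_sum, ← Finset.prod_mul_distrib]
  exact Finset.prod_le_prod (fun j _ => by positivity)
    (fun j _ => laplace_density_sub_le hη (z j) (c j))

section NoisyMax

variable {ι : Type*}

def noisyArgmaxRegion (g : ι → ℝ) (i : ι) : Set (ι → ℝ) :=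
  {z | ∀ j, j ≠ i → g j + z j < g i + z i}

theorem measurableSet_noisyArgmaxRegion [Countable ι] (g : ι → ℝ) (i : ι) :
    MeasurableSet (noisyArgmaxRegion g i) := by
  have hinter : noisyArgmaxRegion g i = ⋂ j, ⋂ (_ : j ≠ i), {z | g j + z j < g i + z i} := by
    ext z
    simp only [noisyArgmaxRegion, Set.mem_ofPred_eq, Set.mem_iInter]
  rw [hinter]
  exact .iInter fun j => .iInter fun _ =>
    measurableSet_lt (measurable_const.add (measurable_pi_apply j))
      (measurable_const.add (measurable_pi_apply i))

theorem mem_noisyArgmaxRegion_of_sub_single_mem [DecidableEq ι] {g g' : ι → ℝ} {Δ : ℝ}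
    (hgg' : ∀ j, |g j - g' j| ≤ Δ) {i : ι} {z : ι → ℝ}
    (hz : z - Pi.single i (2 * Δ) ∈ noisyArgmaxRegion g i) :
    z ∈ noisyArgmaxRegion g' i := by
  intro j hji
  have hwin := hz j hji
  simp only [Pi.sub_apply, Pi.single_eq_same, Pi.single_eq_of_ne hji, sub_zero] at hwin
  have hj := abs_le.mp (hgg' j)
  have hi := abs_le.mp (hgg' i)
  linarith [hj.1, hi.2]

end NoisyMax

open MeasureTheory in
/-- Privacy of Weighted Return Noisy Max: with i.i.d. Laplace(1/η) noise added to k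
    quality functions of robust sensitivity ≤ Δ at scale ζ, for neighboring datasets
    S ∼ S' and distributions μ, μ' with d(μ,μ') < ζ, the probability that index i is
    the noisy argmax changes by at most a factor exp(2ηΔ). -/
theorem weighted_return_noisy_max_privacy
    {Dataset Dist : Type*} (neighbor : Dataset → Dataset → Prop)
    (tv : Dist → Dist → ℝ) {k : ℕ}
    (f : Fin k → Dataset → Dist → ℝ) (Δ ζ η : ℝ) (hη : 0 < η)
    (hsens : ∀ i, ∀ S S', neighbor S S' → ∀ μ μ', tv μ μ' < ζ →
      |f i S μ - f i S' μ'| ≤ Δ)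
    (S S' : Dataset) (hSS' : neighbor S S')
    (μ μ' : Dist) (hμμ' : tv μ μ' < ζ) (i : Fin k) :
    (volume.withDensity
        (fun z : Fin k → ℝ => ENNReal.ofReal (∏ j, η / 2 * Real.exp (-η * |z j|))))
      {z | ∀ j, j ≠ i → f j S μ + z j < f i S μ + z i}
    ≤ ENNReal.ofReal (Real.exp (2 * η * Δ)) *
      (volume.withDensity
          (fun z : Fin k → ℝ => ENNReal.ofReal (∏ j, η / 2 * Real.exp (-η * |z j|))))
        {z | ∀ j, j ≠ i → f j S' μ' + z j < f i S' μ' + z i} := by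
  have hclose : ∀ j, |f j S μ - f j S' μ'| ≤ Δ := fun j => hsens j S S' hSS' μ μ' hμμ'
  have hΔ : 0 ≤ Δ := (abs_nonneg _).trans (hclose i)
  have hshift_cost : ∑ j, |Pi.single i (2 * Δ) j| = 2 * Δ := by
    simp [Pi.single_apply, apply_ite, hΔ]
  refine withDensity_le_mul_of_sub_mem ENNReal.ofReal_ne_top (c := Pi.single i (2 * Δ))
    (fun z => ?_) (measurableSet_noisyArgmaxRegion _ i) (measurableSet_noisyArgmaxRegion _ i)
    (fun z => mem_noisyArgmaxRegion_of_sub_single_mem hclose)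
  rw [← ENNReal.ofReal_mul (Real.exp_nonneg _)]
  refine ENNReal.ofReal_le_ofReal ((prod_laplace_density_sub_le hη.le z _).trans_eq ?_)
  rw [hshift_cost, mul_left_comm, mul_assoc]
end

section
/- Let Γ be a nonempty closed convex set of measures on a finite set S (viewed as a subset of ℝ^{|S|} with nonnegative coordinates), and let μ̃ be a measure with strictly positive coordinates. Then the Bregman projection Π_Γ μ̃ = argmin_{μ ∈ Γ} KL(μ‖μ̃) exists, and for every ν ∈ Γ the Pythagorean-type inequality KL(ν‖μ̃) ≥ KL(ν‖Π_Γ μ̃) + KL(Π_Γ μ̃‖μ̃) holds. -/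
/- Bregman's argument. For `t ∈ (0, 1)` the point `w = p + t • (ν - p)` of the segment from the
minimiser `p` to `ν ∈ Γ` charges every point charged by `p` or `ν`, so the three-point identity
`KL(q‖μ) = KL(q‖w) + KL(w‖μ) + ⟪q - w, log w - log μ⟫` applies to `q = p` and to `q = ν`. With
`q = p`, minimality of `p` makes `⟪ν - p, log w - log μ⟫` nonnegative; with `q = ν` this gives
`KL(ν‖w) + KL(w‖μ) ≤ KL(ν‖μ)`. Letting `t → 0`, lower semicontinuity of `KL(ν‖·)` on the
nonnegative orthant yields the Pythagorean inequality at `p`, without knowing beforehand that the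
support of `ν` lies in that of `p`. Existence of `p` holds because the sublevel sets of `KL(·‖μ)`
are compact. -/

/-- Generalized KL divergence between nonnegative measures on a finite set,
    with the convention 0·ln 0 = 0 (note `Real.log 0 = 0` in Mathlib). -/
noncomputable def genKL {S : Type*} [Fintype S] (μ ν : S → ℝ) : ℝ :=
  ∑ x, (μ x * Real.log (μ x / ν x) - μ x + ν x)

open Real Set Filter Topology InformationTheory

noncomputable def klTerm (a b : ℝ) : ℝ := a * log (a / b) - a + b

section klTerm

variable {a b c : ℝ}

@[simp]
lemma klTerm_zero_left (b : ℝ) : klTerm 0 b = b := by simp [klTerm]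

@[simp]
lemma klTerm_zero_right (a : ℝ) : klTerm a 0 = -a := by simp [klTerm]

lemma klTerm_eq_mul_klFun (a : ℝ) (hb : b ≠ 0) : klTerm a b = b * klFun (a / b) := by
  rw [klTerm, klFun_apply]
  field_simp
  ring

lemma klTerm_nonneg (ha : 0 ≤ a) (hb : 0 ≤ b) (hab : b = 0 → a = 0) : 0 ≤ klTerm a b := by
  rcases hb.eq_or_lt with rfl | hb
  · simp [hab rfl]
  · rw [klTerm_eq_mul_klFun a hb.ne']
    exact mul_nonneg hb.le (klFun_nonneg (div_nonneg ha hb.le))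

lemma klTerm_zero_right_le (ha : 0 ≤ a) (hb : 0 ≤ b) : klTerm a 0 ≤ klTerm a b := by
  rcases hb.eq_or_lt with rfl | hb
  · rfl
  · rw [klTerm_zero_right]
    linarith [klTerm_nonneg ha hb.le fun h => absurd h hb.ne']

lemma le_klTerm_of_exp_two_mul_le (hb : 0 < b) (h : exp 2 * b ≤ a) : a ≤ klTerm a b := by
  have ha : 0 ≤ a := le_trans (by positivity) h
  have hlog : 2 ≤ log (a / b) := by
    rw [le_log_iff_exp_le (lt_of_lt_of_le (by positivity) ((le_div_iff₀ hb).2 h))]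
    exact (le_div_iff₀ hb).2 h
  rw [klTerm]
  nlinarith

lemma klTerm_three_point (a : ℝ) (hc : c ≠ 0) (hab : b = 0 → a = 0) :
    klTerm a c = klTerm a b + klTerm b c + (a - b) * (log b - log c) := by
  rcases eq_or_ne b 0 with rfl | hb
  · simp [hab rfl]
  rcases eq_or_ne a 0 with rfl | ha
  · simp only [klTerm, log_div hb hc]
    ring
  · simp only [klTerm, log_div ha hc, log_div ha hb, log_div hb hc]
    ring

lemma continuous_klTerm_left (hb : b ≠ 0) : Continuous (klTerm · b) := by
  simp only [klTerm_eq_mul_klFun _ hb]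
  fun_prop

lemma lowerSemicontinuousOn_klTerm_right (ha : 0 ≤ a) :
    LowerSemicontinuousOn (klTerm a) (Ici 0) := by
  intro b hb
  rcases eq_or_ne b 0 with rfl | hb'
  · exact fun y hy => eventually_nhdsWithin_of_forall fun c hc =>
      hy.trans_le (klTerm_zero_right_le ha hc)
  · have : ContinuousAt (fun b => b * klFun (a / b)) b := by fun_prop (disch := assumption)
    refine (this.congr ?_).lowerSemicontinuousAt.lowerSemicontinuousWithinAt _
    filter_upwards [isOpen_ne.mem_nhds hb'] with c hc
    exact (klTerm_eq_mul_klFun a hc).symm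

end klTerm

section genKL

variable {S : Type*} [Fintype S]

lemma genKL_eq_sum_klTerm (μ ν : S → ℝ) : genKL μ ν = ∑ x, klTerm (μ x) (ν x) := rfl

lemma genKL_nonneg {μ ν : S → ℝ} (hμ : 0 ≤ μ) (hν : 0 ≤ ν) (h : ∀ x, ν x = 0 → μ x = 0) :
    0 ≤ genKL μ ν :=
  Finset.sum_nonneg fun x _ => klTerm_nonneg (hμ x) (hν x) (h x)

lemma genKL_three_point (q : S → ℝ) {w μ : S → ℝ} (hμ : ∀ x, μ x ≠ 0)
    (h : ∀ x, w x = 0 → q x = 0) :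
    genKL q μ = genKL q w + genKL w μ + ∑ x, (q x - w x) * (log (w x) - log (μ x)) := by
  simp only [genKL_eq_sum_klTerm, ← Finset.sum_add_distrib]
  exact Finset.sum_congr rfl fun x _ => klTerm_three_point _ (hμ x) (h x)

lemma continuous_genKL_left {ν : S → ℝ} (hν : ∀ x, ν x ≠ 0) : Continuous (genKL · ν) :=
  continuous_finsetSum _ fun x _ => (continuous_klTerm_left (hν x)).comp (continuous_apply x)

lemma lowerSemicontinuousOn_genKL_right {μ : S → ℝ} (hμ : 0 ≤ μ) :
    LowerSemicontinuousOn (genKL μ) (Ici 0) :=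
  lowerSemicontinuousOn_sum fun x _ =>
    (lowerSemicontinuousOn_klTerm_right (hμ x)).comp (continuous_apply x).continuousOn
      fun _ hν => hν x

lemma isCompact_genKL_sublevel {ν : S → ℝ} (hν : ∀ x, 0 < ν x) (M : ℝ) :
    IsCompact (Ici 0 ∩ {μ | genKL μ ν ≤ M}) := by
  refine isCompact_Icc.of_isClosed_subset
    (isClosed_Ici.inter (isClosed_le (continuous_genKL_left fun x => (hν x).ne') continuous_const))
    (s := Icc 0 fun x => max (exp 2 * ν x) M) fun μ ⟨hμ, hμM⟩ => ⟨hμ, fun x => ?_⟩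
  rcases le_total (μ x) (exp 2 * ν x) with h | h
  · exact le_max_of_le_left h
  · refine le_max_of_le_right ((le_klTerm_of_exp_two_mul_le (hν x) h).trans (hμM.trans' ?_))
    exact Finset.single_le_sum (f := fun y => klTerm (μ y) (ν y))
      (fun y _ => klTerm_nonneg (hμ y) (hν y).le fun h => absurd h (hν y).ne') (Finset.mem_univ x)

lemma exists_isMinOn_genKL {Γ : Set (S → ℝ)} (hne : Γ.Nonempty) (hclosed : IsClosed Γ)
    (hnonneg : Γ ⊆ Ici 0) {ν : S → ℝ} (hν : ∀ x, 0 < ν x) :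
    ∃ p ∈ Γ, IsMinOn (genKL · ν) Γ p := by
  obtain ⟨μ₀, hμ₀⟩ := hne
  refine (continuous_genKL_left fun x => (hν x).ne').continuousOn.exists_isMinOn' hclosed hμ₀ ?_
  refine (hasBasis_cocompact.inf_principal _).eventually_iff.2
    ⟨_, isCompact_genKL_sublevel hν (genKL μ₀ ν), fun μ ⟨hμK, hμΓ⟩ => ?_⟩
  exact le_of_not_ge fun h => hμK ⟨hnonneg hμΓ, h⟩

end genKL

section Pythagorean

variable {S : Type*} [Fintype S] {Γ : Set (S → ℝ)} {μ p ν : S → ℝ}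

lemma genKL_add_genKL_le_of_isMinOn_of_mem_Ioo (hconvex : Convex ℝ Γ) (hnonneg : Γ ⊆ Ici 0)
    (hμ : ∀ x, 0 < μ x) (hp : p ∈ Γ) (hmin : IsMinOn (genKL · μ) Γ p) (hν : ν ∈ Γ) {t : ℝ}
    (ht : t ∈ Ioo 0 1) :
    genKL ν (p + t • (ν - p)) + genKL (p + t • (ν - p)) μ ≤ genKL ν μ := by
  set w := p + t • (ν - p)
  have hw : w ∈ Γ := hconvex.add_smul_sub_mem hp hν (Ioo_subset_Icc_self ht)
  have hw_apply (x : S) : w x = (1 - t) * p x + t * ν x := by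
    simp only [w, Pi.add_apply, Pi.smul_apply, Pi.sub_apply, smul_eq_mul]
    ring
  have hsupp (x : S) (hx : w x = 0) : p x = 0 ∧ ν x = 0 := by
    have hp_term : 0 ≤ (1 - t) * p x := mul_nonneg (sub_nonneg.2 ht.2.le) (hnonneg hp x)
    have hν_term : 0 ≤ t * ν x := mul_nonneg ht.1.le (hnonneg hν x)
    rw [hw_apply] at hx
    obtain ⟨hp0, hν0⟩ := (add_eq_zero_iff_of_nonneg hp_term hν_term).1 hx
    exact ⟨(mul_eq_zero.1 hp0).resolve_left (sub_ne_zero.2 ht.2.ne'),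
      (mul_eq_zero.1 hν0).resolve_left ht.1.ne'⟩
  set G := ∑ x, (ν x - p x) * (log (w x) - log (μ x))
  have hμ' : ∀ x, μ x ≠ 0 := fun x => (hμ x).ne'
  have hp_split : genKL p μ = genKL p w + genKL w μ - t * G := by
    rw [genKL_three_point p hμ' fun x hx => (hsupp x hx).1, sub_eq_add_neg, Finset.mul_sum,
      ← Finset.sum_neg_distrib]
    congr 1
    exact Finset.sum_congr rfl fun x _ => by rw [hw_apply]; ring
  have hν_split : genKL ν μ = genKL ν w + genKL w μ + (1 - t) * G := by
    rw [genKL_three_point ν hμ' fun x hx => (hsupp x hx).2, Finset.mul_sum]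
    congr 1
    exact Finset.sum_congr rfl fun x _ => by rw [hw_apply]; ring
  have hG : 0 ≤ G := by
    have hpw : 0 ≤ genKL p w :=
      genKL_nonneg (hnonneg hp) (hnonneg hw) fun x hx => (hsupp x hx).1
    have hpw_min : genKL p μ ≤ genKL w μ := hmin hw
    have : 0 ≤ t * G := by linarith
    exact (mul_nonneg_iff_of_pos_left ht.1).1 this
  linarith [mul_nonneg (sub_nonneg.2 ht.2.le) hG]

lemma genKL_add_genKL_le_of_isMinOn (hconvex : Convex ℝ Γ) (hnonneg : Γ ⊆ Ici 0)
    (hμ : ∀ x, 0 < μ x) (hp : p ∈ Γ) (hmin : IsMinOn (genKL · μ) Γ p) (hν : ν ∈ Γ) :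
    genKL ν p + genKL p μ ≤ genKL ν μ := by
  set w : ℝ → S → ℝ := fun t => p + t • (ν - p)
  have hw : Continuous w := by fun_prop
  have hw0 : w 0 = p := by simp [w]
  have hwΓ : MapsTo w (Ioo 0 1) Γ := fun t ht =>
    hconvex.add_smul_sub_mem hp hν (Ioo_subset_Icc_self ht)
  have hlsc : LowerSemicontinuousWithinAt (fun t => genKL ν (w t) + genKL (w t) μ) (Ioo 0 1) 0 := by
    have hleft : LowerSemicontinuousWithinAt (fun t => genKL ν (w t)) (Ioo 0 1) 0 := by
      refine LowerSemicontinuousWithinAt.comp (f := genKL ν) ?_ hw.continuousWithinAt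
        fun t ht => hnonneg (hwΓ ht)
      rw [hw0]
      exact lowerSemicontinuousOn_genKL_right (hnonneg hν) p (hnonneg hp)
    have hright : Continuous fun t => genKL (w t) μ :=
      (continuous_genKL_left fun x => (hμ x).ne').comp hw
    exact hleft.add hright.continuousWithinAt.lowerSemicontinuousWithinAt
  have : (𝓝[Ioo 0 1] (0 : ℝ)).NeBot := left_nhdsWithin_Ioo_neBot one_pos
  have hle : ∃ᶠ t in 𝓝[Ioo 0 1] 0, genKL ν (w t) + genKL (w t) μ ≤ genKL ν μ :=
    (eventually_nhdsWithin_of_forall fun t ht =>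
      genKL_add_genKL_le_of_isMinOn_of_mem_Ioo hconvex hnonneg hμ hp hmin hν ht).frequently
  simpa only [hw0] using hlsc.frequently _ hle

end Pythagorean

/-- Bregman projection onto a nonempty closed convex set Γ of measures exists, and
    satisfies the Pythagorean inequality KL(ν‖μ̃) ≥ KL(ν‖Π_Γ μ̃) + KL(Π_Γ μ̃‖μ̃)
    for every ν ∈ Γ. -/
theorem bregman_projection_exists_and_pythagorean
    {S : Type*} [Fintype S] (Γ : Set (S → ℝ))
    (hne : Γ.Nonempty) (hclosed : IsClosed Γ) (hconvex : Convex ℝ Γ)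
    (hnonneg : ∀ μ ∈ Γ, ∀ x, 0 ≤ μ x)
    (μt : S → ℝ) (hμt : ∀ x, 0 < μt x) :
    ∃ p ∈ Γ, (∀ ν ∈ Γ, genKL p μt ≤ genKL ν μt) ∧
      (∀ ν ∈ Γ, genKL ν p + genKL p μt ≤ genKL ν μt) := by
  have hΓ : Γ ⊆ Ici 0 := fun μ hμ => hnonneg μ hμ
  obtain ⟨p, hp, hmin⟩ := exists_isMinOn_genKL hne hclosed hΓ hμt
  exact ⟨p, hp, fun ν hν => hmin hν, fun ν hν =>
    genKL_add_genKL_le_of_isMinOn hconvex hΓ hμt hp hmin hν⟩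
end
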